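/- (Near-origin radial supersolution on the critical line p + q = m − 1 with p > 0; proof of Theorem 1.5 (E), case p > 0) Let m > 1, p > 0, q = m − 1 − p, c₀ > 0, and set R = (p+1)^{p/(p+1)}·(m−1)^{1/(p+1)}/p. Define u₀(r) = c₀ − c₀·(p r)^{(p+1)/p} / ((p+1)·(m−1)^{1/p}). Let S be a differentiable function on (0, R) with S > 0 and S' ≥ 0 there. Then u₀(r) > 0 for all r ∈ (0, R), u₀'(r) < 0 there, and the radial inequality (S·|u₀'|^{m−2}·u₀')'(r) + S(r)·u₀(r)^p·|u₀'(r)|^q ≤ 0 holds for all r ∈ (0, R). -/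

import Mathlib

open MeasureTheory Real

open Filter Set Topology

/-!
For `r > 0` the profile has `u₀' = -D (p r)^{1/p}` with `D = c₀ / (m - 1)^{1/p}`, so the flux is
`-D^{m-1} S (p r)^{(m-1)/p}`, with derivative
`-D^{m-1} (S' (p r)^{(m-1)/p} + (m - 1) S (p r)^{(m-1)/p - 1})`. The first term is `≤ 0`.
As `0 < u₀ ≤ c₀` below `R` and `q/p = (m-1)/p - 1`, the source term is at most
`c₀^p D^q S (p r)^{(m-1)/p - 1}`, and on the critical line `c₀^p D^q = (m - 1) D^{m-1}`, so the
second term cancels it.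
-/

noncomputable def radialFlux (m : ℝ) (S u : ℝ → ℝ) (t : ℝ) : ℝ :=
  S t * |deriv u t| ^ (m - 2) * deriv u t

lemma abs_neg_rpow_mul_neg {b : ℝ} (hb : 0 < b) (m : ℝ) :
    |-b| ^ (m - 2) * -b = -b ^ (m - 1) := by
  rw [abs_neg, abs_of_pos hb, mul_neg, ← rpow_add_one hb.ne']
  ring_nf

lemma mul_rpow_one_div_rpow {D x : ℝ} (hD : 0 ≤ D) (hx : 0 ≤ x) (e p : ℝ) :
    (D * x ^ (1 / p)) ^ e = D ^ e * x ^ (e / p) := by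
  rw [mul_rpow hD (rpow_nonneg hx _), ← rpow_mul hx, one_div_mul_eq_div]

section CriticalProfile

variable {m p c₀ : ℝ}

noncomputable def criticalProfile (m p c₀ r : ℝ) : ℝ :=
  c₀ - c₀ * (p * r) ^ ((p + 1) / p) / ((p + 1) * (m - 1) ^ (1 / p))

noncomputable def criticalSlope (m p c₀ : ℝ) : ℝ :=
  c₀ / (m - 1) ^ (1 / p)

lemma criticalSlope_pos (hm : 1 < m) (hc₀ : 0 < c₀) : 0 < criticalSlope m p c₀ :=
  div_pos hc₀ (rpow_pos_of_pos (sub_pos.2 hm) _)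

-- This is where `p + q = m - 1` enters.
lemma rpow_mul_criticalSlope_rpow (hm : 1 < m) (hp : 0 < p) (hc₀ : 0 ≤ c₀) :
    c₀ ^ p * criticalSlope m p c₀ ^ (m - 1 - p) =
      (m - 1) * criticalSlope m p c₀ ^ (m - 1) := by
  have hm1 : 0 < m - 1 := sub_pos.2 hm
  have hslope : criticalSlope m p c₀ ^ p * (m - 1) = c₀ ^ p := by
    rw [criticalSlope, div_rpow hc₀ (rpow_nonneg hm1.le _), ← rpow_mul hm1.le,
      one_div_mul_cancel hp.ne', rpow_one, div_mul_cancel₀ _ hm1.ne']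
  have hsplit : criticalSlope m p c₀ ^ (m - 1) =
      criticalSlope m p c₀ ^ p * criticalSlope m p c₀ ^ (m - 1 - p) := by
    have hD : 0 ≤ criticalSlope m p c₀ := div_nonneg hc₀ (rpow_nonneg hm1.le _)
    rw [← rpow_add' hD (by linarith : p + (m - 1 - p) ≠ 0), add_sub_cancel]
  rw [← hslope, hsplit]
  ring

lemma hasDerivAt_criticalProfile (hm : 1 < m) (hp : 0 < p) {t : ℝ} (ht : 0 < t) :
    HasDerivAt (criticalProfile m p c₀) (-(criticalSlope m p c₀ * (p * t) ^ (1 / p))) t := by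
  have hpow : HasDerivAt (fun x => (p * x) ^ ((p + 1) / p))
      (p * 1 * ((p + 1) / p) * (p * t) ^ ((p + 1) / p - 1)) t :=
    ((hasDerivAt_id t).const_mul p).rpow_const (Or.inl (mul_pos hp ht).ne')
  have hexp : (p + 1) / p - 1 = 1 / p := by field_simp; ring
  have hK : (m - 1) ^ (1 / p) ≠ 0 := (rpow_pos_of_pos (sub_pos.2 hm) _).ne'
  have hprofile := ((hpow.const_mul c₀).div_const ((p + 1) * (m - 1) ^ (1 / p))).const_sub c₀
  refine hprofile.congr_deriv ?_
  rw [hexp, criticalSlope]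
  field_simp

lemma deriv_criticalProfile (hm : 1 < m) (hp : 0 < p) {t : ℝ} (ht : 0 < t) :
    deriv (criticalProfile m p c₀) t = -(criticalSlope m p c₀ * (p * t) ^ (1 / p)) :=
  (hasDerivAt_criticalProfile hm hp ht).deriv

lemma deriv_criticalProfile_neg (hm : 1 < m) (hp : 0 < p) (hc₀ : 0 < c₀) {t : ℝ}
    (ht : 0 < t) :
    deriv (criticalProfile m p c₀) t < 0 := by
  rw [deriv_criticalProfile hm hp ht, neg_lt_zero]
  exact mul_pos (criticalSlope_pos hm hc₀) (rpow_pos_of_pos (mul_pos hp ht) _)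

lemma criticalProfile_le (hm : 1 < m) (hp : 0 < p) (hc₀ : 0 ≤ c₀) {r : ℝ} (hr : 0 ≤ r) :
    criticalProfile m p c₀ r ≤ c₀ := by
  have hK : 0 ≤ (m - 1) ^ (1 / p) := rpow_nonneg (sub_pos.2 hm).le _
  have : 0 ≤ c₀ * (p * r) ^ ((p + 1) / p) / ((p + 1) * (m - 1) ^ (1 / p)) := by positivity
  unfold criticalProfile
  linarith

lemma criticalProfile_pos (hm : 1 < m) (hp : 0 < p) (hc₀ : 0 < c₀) {r : ℝ} (hr : 0 ≤ r)
    (hrR : p * r < (p + 1) ^ (p / (p + 1)) * (m - 1) ^ (1 / (p + 1))) :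
    0 < criticalProfile m p c₀ r := by
  have hm1 : 0 < m - 1 := sub_pos.2 hm
  have hK : 0 < (p + 1) * (m - 1) ^ (1 / p) := by positivity
  have hpow : (p * r) ^ ((p + 1) / p) < (p + 1) * (m - 1) ^ (1 / p) := by
    rw [← lt_rpow_inv_iff_of_pos (by positivity) hK.le (by positivity),
      mul_rpow (by positivity) (by positivity), ← rpow_mul hm1.le, inv_div]
    convert hrR using 3
    field_simp
  unfold criticalProfile
  rw [sub_pos, div_lt_iff₀ hK]
  exact mul_lt_mul_of_pos_left hpow hc₀

lemma radialFlux_criticalProfile (hm : 1 < m) (hp : 0 < p) (hc₀ : 0 < c₀) (S : ℝ → ℝ)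
    {t : ℝ} (ht : 0 < t) :
    radialFlux m S (criticalProfile m p c₀) t =
      -(criticalSlope m p c₀ ^ (m - 1) * (S t * (p * t) ^ ((m - 1) / p))) := by
  have hpt : 0 < p * t := mul_pos hp ht
  rw [radialFlux, deriv_criticalProfile hm hp ht, mul_assoc,
    abs_neg_rpow_mul_neg (mul_pos (criticalSlope_pos hm hc₀) (rpow_pos_of_pos hpt _)),
    mul_rpow_one_div_rpow (criticalSlope_pos hm hc₀).le hpt.le]
  ring

lemma hasDerivAt_radialFlux_criticalProfile (hm : 1 < m) (hp : 0 < p) (hc₀ : 0 < c₀)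
    {S : ℝ → ℝ} {r : ℝ} (hr : 0 < r) (hS : DifferentiableAt ℝ S r) :
    HasDerivAt (radialFlux m S (criticalProfile m p c₀))
      (-(criticalSlope m p c₀ ^ (m - 1) * (deriv S r * (p * r) ^ ((m - 1) / p)
        + S r * ((m - 1) * (p * r) ^ ((m - 1) / p - 1))))) r := by
  have hpow : HasDerivAt (fun t => (p * t) ^ ((m - 1) / p))
      (p * 1 * ((m - 1) / p) * (p * r) ^ ((m - 1) / p - 1)) r :=
    ((hasDerivAt_id r).const_mul p).rpow_const (Or.inl (mul_pos hp hr).ne')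
  have hflux := ((hS.hasDerivAt.mul hpow).const_mul (criticalSlope m p c₀ ^ (m - 1))).neg
  refine (hflux.congr_of_eventuallyEq (eventuallyEq_of_mem (Ioi_mem_nhds hr)
    fun t ht => radialFlux_criticalProfile hm hp hc₀ S ht)).congr_deriv ?_
  field_simp

lemma criticalProfile_source_le (hm : 1 < m) (hp : 0 < p) (hc₀ : 0 < c₀) {r : ℝ} (hr : 0 < r)
    (hu : 0 ≤ criticalProfile m p c₀ r) :
    criticalProfile m p c₀ r ^ p * |deriv (criticalProfile m p c₀) r| ^ (m - 1 - p) ≤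
      (m - 1) * criticalSlope m p c₀ ^ (m - 1) * (p * r) ^ ((m - 1) / p - 1) := by
  have hpr : 0 < p * r := mul_pos hp hr
  have hslope := criticalSlope_pos (p := p) hm hc₀
  rw [deriv_criticalProfile hm hp hr, abs_neg,
    abs_of_pos (mul_pos hslope (rpow_pos_of_pos hpr _)), mul_rpow_one_div_rpow hslope.le hpr.le]
  have hexp : (m - 1 - p) / p = (m - 1) / p - 1 := by field_simp
  calc _ ≤ c₀ ^ p * (criticalSlope m p c₀ ^ (m - 1 - p) * (p * r) ^ ((m - 1 - p) / p)) := by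
        gcongr
        exact criticalProfile_le hm hp hc₀.le hr.le
    _ = (m - 1) * criticalSlope m p c₀ ^ (m - 1) * (p * r) ^ ((m - 1) / p - 1) := by
        rw [← mul_assoc, rpow_mul_criticalSlope_rpow hm hp hc₀.le, hexp]

theorem criticalProfile_radial_supersolution (hm : 1 < m) (hp : 0 < p) (hc₀ : 0 < c₀)
    {S : ℝ → ℝ} {r : ℝ} (hr : 0 < r) (hu : 0 ≤ criticalProfile m p c₀ r)
    (hS : 0 ≤ S r) (hSd : DifferentiableAt ℝ S r) (hS' : 0 ≤ deriv S r) :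
    DifferentiableAt ℝ (radialFlux m S (criticalProfile m p c₀)) r ∧
      deriv (radialFlux m S (criticalProfile m p c₀)) r
        + S r * criticalProfile m p c₀ r ^ p * |deriv (criticalProfile m p c₀) r| ^ (m - 1 - p)
        ≤ 0 := by
  have hflux := hasDerivAt_radialFlux_criticalProfile hm hp hc₀ hr hSd
  have hsource := mul_le_mul_of_nonneg_left (criticalProfile_source_le hm hp hc₀ hr hu) hS
  have hpr : 0 < p * r := mul_pos hp hr
  have hslope := criticalSlope_pos (p := p) hm hc₀
  have hdrift : 0 ≤ criticalSlope m p c₀ ^ (m - 1) * (deriv S r * (p * r) ^ ((m - 1) / p)) := by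
    positivity
  refine ⟨hflux.differentiableAt, ?_⟩
  rw [hflux.deriv]
  linarith

end CriticalProfile

/-- Near-origin radial supersolution on the critical line `p + q = m − 1`
with `p > 0` (proof of Theorem 1.5 (E), case `p > 0`). -/
theorem radial_supersolution_near_origin_critical_line
    (m p q c₀ R : ℝ)
    (hm : 1 < m) (hp : 0 < p) (hq : q = m - 1 - p) (hc₀ : 0 < c₀)
    (hR : R = (p + 1) ^ (p / (p + 1)) * (m - 1) ^ (1 / (p + 1)) / p)
    (u₀ S : ℝ → ℝ)
    (hu₀ : ∀ r : ℝ, 0 < r →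
      u₀ r = c₀ - c₀ * (p * r) ^ ((p + 1) / p) / ((p + 1) * (m - 1) ^ (1 / p)))
    (hS : ∀ r ∈ Set.Ioo (0 : ℝ) R,
      0 < S r ∧ DifferentiableAt ℝ S r ∧ 0 ≤ deriv S r) :
    ∀ r ∈ Set.Ioo (0 : ℝ) R,
      0 < u₀ r ∧ deriv u₀ r < 0 ∧
      DifferentiableAt ℝ (fun t => S t * |deriv u₀ t| ^ (m - 2) * deriv u₀ t) r ∧
      deriv (fun t => S t * |deriv u₀ t| ^ (m - 2) * deriv u₀ t) r
        + S r * u₀ r ^ p * |deriv u₀ r| ^ q ≤ 0 := by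
  subst hq hR
  intro r hrI
  obtain ⟨hSr, hSd, hS'⟩ := hS r hrI
  obtain ⟨hr, hrR⟩ := hrI
  have hu : EqOn u₀ (criticalProfile m p c₀) (Ioi 0) := hu₀
  have hderiv : EqOn (deriv u₀) (deriv (criticalProfile m p c₀)) (Ioi 0) := hu.deriv isOpen_Ioi
  have hflux : radialFlux m S u₀ =ᶠ[𝓝 r] radialFlux m S (criticalProfile m p c₀) :=
    eventuallyEq_of_mem (Ioi_mem_nhds hr) fun t ht => by simp only [radialFlux, hderiv ht]
  have hpos := criticalProfile_pos hm hp hc₀ hr.le ((lt_div_iff₀' hp).1 hrR)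
  obtain ⟨hdiff, hineq⟩ :=
    criticalProfile_radial_supersolution hm hp hc₀ hr hpos.le hSr.le hSd hS'
  refine ⟨hu hr ▸ hpos, hderiv hr ▸ deriv_criticalProfile_neg hm hp hc₀ hr,
    hflux.differentiableAt_iff.2 hdiff, ?_⟩
  change deriv (radialFlux m S u₀) r + _ ≤ 0
  rwa [hflux.deriv_eq, hu hr, hderiv hr]
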